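/- (Lemma 3, one-step expected contraction of the interlaced Kaczmarz update.) Let V ∈ ℂ^{k×n} have full row rank k, let b_prev, b⋆ ∈ ℂ^n with x⋆ := V b⋆, suppose b_prev − b⋆ ∈ range(V*), and let x_t ∈ ℂ^k be arbitrary. For each p define b(p) := b_prev + (((x_t)_p − V^p b_prev)/‖V^p‖²)(V^p)*. Then Σ_{p=1}^{k} (‖V^p‖²/‖V‖_F²) ‖b(p) − b⋆‖² ≤ α_V ‖b_prev − b⋆‖² + ‖x_t − x⋆‖²/‖V‖_F², where α_V := 1 − σ_min(V)²/‖V‖_F² and σ_min(V) is the smallest nonzero singular value of V. -/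

import Mathlib

open Matrix Finset

noncomputable section

/-- Squared Euclidean norm of a complex vector. -/
def vnsq {n : ℕ} (x : Fin n → ℂ) : ℝ := ∑ i, ‖x i‖ ^ 2

/-- Squared Frobenius norm of a complex matrix. -/
def froSq {m n : ℕ} (A : Matrix (Fin m) (Fin n) ℂ) : ℝ := ∑ i, vnsq (A i)

/-- Square of the smallest nonzero singular value of `A`: the infimum of `‖A x‖²`
over unit vectors `x` in the row space of `A`. -/
def sMinSq {m n : ℕ} (A : Matrix (Fin m) (Fin n) ℂ) : ℝ :=
  sInf {r : ℝ | ∃ u : Fin m → ℂ, vnsq (Aᴴ.mulVec u) = 1 ∧ r = vnsq (A.mulVec (Aᴴ.mulVec u))}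

/-- `α_A := 1 - σ_min(A)²/‖A‖_F²`. -/
def alphaOf {m n : ℕ} (A : Matrix (Fin m) (Fin n) ℂ) : ℝ := 1 - sMinSq A / froSq A

lemma vnsq_nonneg {n : ℕ} (x : Fin n → ℂ) : 0 ≤ vnsq x := by
  unfold vnsq; positivity

lemma vnsq_smul {n : ℕ} (c : ℂ) (x : Fin n → ℂ) :
    vnsq (fun j => c * x j) = ‖c‖ ^ 2 * vnsq x := by
  simp [vnsq, Finset.mul_sum, mul_pow]

lemma sq_norm_add (z w : ℂ) :
    ‖z + w‖ ^ 2 = ‖z‖ ^ 2 + 2 * (z * star w).re + ‖w‖ ^ 2 := by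
  simp only [Complex.sq_norm, Complex.normSq_apply, Complex.add_re,
    Complex.add_im, Complex.mul_re, Complex.mul_im, Complex.star_def, Complex.conj_re,
    Complex.conj_im]
  ring

lemma vnsq_add_mul {n : ℕ} (e v : Fin n → ℂ) (c : ℂ) :
    vnsq (fun j => e j + c * v j)
      = vnsq e + 2 * (c * ∑ j, v j * star (e j)).re + ‖c‖ ^ 2 * vnsq v := by
  unfold vnsq
  have : ∀ j, ‖e j + c * v j‖ ^ 2
      = ‖e j‖ ^ 2 + 2 * (c * (v j * star (e j))).re + ‖c‖ ^ 2 * ‖v j‖ ^ 2 := by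
    intro j
    rw [sq_norm_add]
    simp only [Complex.mul_re, Complex.mul_im, Complex.star_def, Complex.conj_re,
      Complex.conj_im, Complex.sq_norm, Complex.normSq_apply]
    ring
  simp only [this, Finset.sum_add_distrib]
  rw [Finset.mul_sum, Complex.re_sum, ← Finset.mul_sum, ← Finset.mul_sum]

lemma key_id (d g : ℂ) :
    2 * ((d - g) * star g).re + ‖d - g‖ ^ 2 = ‖d‖ ^ 2 - ‖g‖ ^ 2 := by
  simp only [Complex.sq_norm, Complex.normSq_apply, Complex.sub_re,
    Complex.sub_im, Complex.mul_re, Complex.mul_im, Complex.star_def, Complex.conj_re,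
    Complex.conj_im]
  ring

/-- **Lemma 3 (one-step expected contraction of the interlaced Kaczmarz update).**
For `V` of full row rank, `x⋆ = V b⋆`, `b_prev − b⋆ ∈ range(Vᴴ)`, and `b(p)` the RK
update toward the interlaced system `V b = x_t`, the expectation over a row `p` drawn
with probability `‖V^p‖²/‖V‖_F²` of `‖b(p) − b⋆‖²` is at most
`α_V ‖b_prev − b⋆‖² + ‖x_t − x⋆‖²/‖V‖_F²`. -/
theorem interlaced_step_contraction
    (k n : ℕ) (V : Matrix (Fin k) (Fin n) ℂ)
    (hV : Function.Surjective V.mulVec)          -- V has full row rank k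
    (bprev bs : Fin n → ℂ) (xs : Fin k → ℂ) (hxs : xs = V.mulVec bs)
    (hrange : ∃ u : Fin k → ℂ, Vᴴ.mulVec u = bprev - bs)  -- b_prev − b⋆ ∈ range(Vᴴ)
    (xt : Fin k → ℂ)
    (b : Fin k → Fin n → ℂ)
    (hb : ∀ p, b p = fun j =>
      bprev j + (xt p - V.mulVec bprev p) / (vnsq (V p) : ℂ) * star (V p j)) :
    ∑ p, (vnsq (V p) / froSq V) * vnsq (b p - bs) ≤
      alphaOf V * vnsq (bprev - bs) + vnsq (xt - xs) / froSq V := by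
  rcases Nat.eq_zero_or_pos k with hk | hk
  · subst hk
    obtain ⟨u, hu⟩ := hrange
    have he : bprev - bs = 0 := by
      rw [← hu]; funext j; simp [Matrix.mulVec, dotProduct]
    have h1 : vnsq (bprev - bs) = 0 := by rw [he]; simp [vnsq]
    have h2 : vnsq (xt - xs) = 0 := by simp [vnsq]
    rw [h1, h2]
    simp
  -- main case
  set e := bprev - bs with hedef
  set d := xt - xs with hddef
  set g := V.mulVec e with hgdef
  set F := froSq V with hFdef
  -- every row is nonzero
  have hrow : ∀ p, 0 < vnsq (V p) := by
    intro p
    obtain ⟨x, hx⟩ := hV (Pi.single p 1)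
    have hx1 : (∑ j, V p j * x j) = 1 := by
      have := congrFun hx p
      simpa [Matrix.mulVec, dotProduct] using this
    have : ∃ j ∈ Finset.univ, V p j * x j ≠ 0 := by
      by_contra h
      push_neg at h
      rw [Finset.sum_eq_zero (fun j hj => h j hj)] at hx1
      exact one_ne_zero hx1.symm
    obtain ⟨j, -, hj⟩ := this
    have hVpj : V p j ≠ 0 := fun h => hj (by simp [h])
    refine Finset.sum_pos' (fun i _ => by positivity) ⟨j, Finset.mem_univ j, ?_⟩
    have : 0 < ‖V p j‖ := norm_pos_iff.2 hVpj
    positivity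
  have hFpos : 0 < F := by
    rw [hFdef]; unfold froSq
    exact Finset.sum_pos (fun p _ => hrow p) ⟨⟨0, hk⟩, Finset.mem_univ _⟩
  have hFne : F ≠ 0 := ne_of_gt hFpos
  -- g p = (V.mulVec bprev p) - xs p
  have hgp : ∀ p, g p = V.mulVec bprev p - xs p := by
    intro p
    rw [hgdef, hedef, hxs, Matrix.mulVec_sub]
    simp
  -- per-row identity
  have hterm : ∀ p, vnsq (b p - bs)
      = vnsq e + (‖d p‖ ^ 2 - ‖g p‖ ^ 2) / vnsq (V p) := by
    intro p
    have hsp := hrow p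
    set s := vnsq (V p) with hsdef
    set r : ℂ := xt p - V.mulVec bprev p with hrdef
    have h1 : b p - bs = fun j => e j + (r / (s : ℂ)) * star (V p j) := by
      funext j
      simp only [Pi.sub_apply, hb p, hedef]
      ring
    rw [h1, vnsq_add_mul]
    have hsum : (∑ j, star (V p j) * star (e j)) = star (g p) := by
      rw [hgdef]
      simp [Matrix.mulVec, dotProduct, ← star_mul']
    have hvs : vnsq (fun j => star (V p j)) = s := by
      simp [vnsq, hsdef]
    rw [hsum, hvs]
    have hr : r = d p - g p := by
      rw [hrdef, hddef, hgp p]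
      simp
    have hre : (r / (s : ℂ) * star (g p)).re = (r * star (g p)).re / s := by
      rw [div_mul_eq_mul_div]
      rw [Complex.div_ofReal_re]
    have hnc : ‖r / (s : ℂ)‖ ^ 2 = ‖r‖ ^ 2 / s ^ 2 := by
      rw [norm_div, div_pow, Complex.norm_real, Real.norm_of_nonneg (le_of_lt hsp)]
    have heq : vnsq e + 2 * ((r * star (g p)).re / s) + ‖r‖ ^ 2 / s ^ 2 * s
        = vnsq e + (2 * (r * star (g p)).re + ‖r‖ ^ 2) / s := by
      field_simp
      ring
    rw [hre, hnc, heq, hr, key_id]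
  -- sum up
  have hsumeq : ∑ p, (vnsq (V p) / F) * vnsq (b p - bs)
      = vnsq e + (vnsq d - vnsq g) / F := by
    have h1 : ∀ p ∈ Finset.univ, (vnsq (V p) / F) * vnsq (b p - bs)
        = vnsq (V p) * vnsq e / F + (‖d p‖ ^ 2 - ‖g p‖ ^ 2) / F := by
      intro p _
      rw [hterm p]
      have hsp := (hrow p).ne'
      field_simp
    rw [Finset.sum_congr rfl h1, Finset.sum_add_distrib]
    have h2 : ∑ p, vnsq (V p) * vnsq e / F = vnsq e := by
      rw [← Finset.sum_div, ← Finset.sum_mul]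
      have : (∑ p, vnsq (V p)) = F := by rw [hFdef]; rfl
      rw [this]
      field_simp
    have h3 : ∑ p, (‖d p‖ ^ 2 - ‖g p‖ ^ 2) / F = (vnsq d - vnsq g) / F := by
      rw [← Finset.sum_div, Finset.sum_sub_distrib]
      rfl
    rw [h2, h3]
  rw [hsumeq]
  -- the singular value bound
  have hm : sMinSq V * vnsq e ≤ vnsq g := by
    rcases eq_or_lt_of_le (vnsq_nonneg e) with h0 | h0
    · rw [← h0, mul_zero]
      exact vnsq_nonneg g
    · obtain ⟨u, hu⟩ := hrange
      set t := Real.sqrt (vnsq e) with htdef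
      have ht : 0 < t := Real.sqrt_pos.2 h0
      have ht2 : t ^ 2 = vnsq e := Real.sq_sqrt (le_of_lt h0)
      have hbdd : BddBelow {r : ℝ | ∃ u : Fin k → ℂ,
          vnsq (Vᴴ.mulVec u) = 1 ∧ r = vnsq (V.mulVec (Vᴴ.mulVec u))} := by
        exact ⟨0, fun r hr => by obtain ⟨w, -, hw⟩ := hr; rw [hw]; exact vnsq_nonneg _⟩
      have hsmul1 : Vᴴ.mulVec (((1 : ℂ)/(t : ℂ)) • u) = fun j => ((1 : ℂ)/(t : ℂ)) * e j := by
        rw [Matrix.mulVec_smul, hu]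
        rfl
      have hnorm1 : ‖(1 : ℂ)/(t : ℂ)‖ ^ 2 = 1 / t ^ 2 := by
        rw [norm_div, div_pow, Complex.norm_real, Real.norm_of_nonneg (le_of_lt ht)]
        simp
      have hmem : vnsq g / t ^ 2 ∈ {r : ℝ | ∃ u : Fin k → ℂ,
          vnsq (Vᴴ.mulVec u) = 1 ∧ r = vnsq (V.mulVec (Vᴴ.mulVec u))} := by
        refine ⟨((1 : ℂ)/(t : ℂ)) • u, ?_, ?_⟩
        · rw [hsmul1, vnsq_smul, hnorm1, ht2]
          field_simp
        · rw [hsmul1]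
          have : V.mulVec (fun j => ((1 : ℂ)/(t : ℂ)) * e j)
              = fun p => ((1 : ℂ)/(t : ℂ)) * g p := by
            funext p
            rw [hgdef]
            simp [Matrix.mulVec, dotProduct, Finset.mul_sum]
            exact Finset.sum_congr rfl (fun j _ => by ring)
          rw [this, vnsq_smul, hnorm1]
          ring
      have hle : sMinSq V ≤ vnsq g / t ^ 2 := csInf_le hbdd hmem
      rw [ht2] at hle
      calc sMinSq V * vnsq e ≤ (vnsq g / vnsq e) * vnsq e :=
            mul_le_mul_of_nonneg_right hle (vnsq_nonneg e)
        _ = vnsq g := by field_simp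
  -- conclude
  unfold alphaOf
  rw [← hFdef]
  have h4 : sMinSq V * vnsq e / F ≤ vnsq g / F := by gcongr
  have e1 : (vnsq d - vnsq g) / F = vnsq d / F - vnsq g / F := sub_div _ _ _
  have e2 : (1 - sMinSq V / F) * vnsq e = vnsq e - sMinSq V * vnsq e / F := by ring
  rw [e1, e2]
  linarith
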